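/- arXiv:2303.08552 — 3 statements merged into one kernel-verified Lean document; each statement's English description precedes it below -/
import Mathlib

section
/- Let N ≥ 2, let S be an N×N real symmetric positive definite matrix, let Q = diag(q) with q_k ≥ q_min > 0 for all k, and let L be an N×N real symmetric positive semidefinite matrix. Fix distinct indices i ≠ j, let b = eᵢ − eⱼ, and suppose L − w·b·bᵀ is positive semidefinite for some w ≥ 0. Set h = bᵀ S b and r = bᵀ (Q + L)⁻¹ b, and let δ* = max(−w, 1/h − 1/r). Then for every δ ≥ −w, the matrix Q + L + δ·b·bᵀ is positive definite, and −log det(Q + L + δ*·b·bᵀ) + δ*·h ≤ −log det(Q + L + δ·b·bᵀ) + δ·h. -/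
open Matrix

private lemma psd_smul' {n : ℕ} {A : Matrix (Fin n) (Fin n) ℝ} (hA : A.PosSemidef) {c : ℝ}
    (hc : 0 ≤ c) : (c • A).PosSemidef := by
  constructor
  · unfold IsHermitian
    rw [conjTranspose_smul, star_trivial, hA.1.eq]
  · exact (hA.smul hc).2

private lemma psd_vmv' {n : ℕ} (b : Fin n → ℝ) : (vecMulVec b b).PosSemidef := by
  rw [vecMulVec_eq Unit]
  simpa using posSemidef_conjTranspose_mul_self (replicateRow Unit b)

private lemma det_rank_one_update {N : ℕ} (A : Matrix (Fin N) (Fin N) ℝ) (hA : A.PosDef)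
    (b : Fin N → ℝ) (δ : ℝ) :
    (A + δ • vecMulVec b b).det = A.det * (1 + δ * (b ⬝ᵥ A⁻¹ *ᵥ b)) := by
  have h1 : δ • vecMulVec b b = replicateCol Unit (δ • b) * replicateRow Unit b := by
    rw [← vecMulVec_eq]
    ext k l
    simp [vecMulVec]
    ring
  rw [h1, det_add_replicateCol_mul_replicateRow hA.det_pos.ne'.isUnit]
  congr 1
  rw [det_unique]
  simp [Matrix.mul_apply, Matrix.one_apply, dotProduct, mulVec, Finset.mul_sum, Finset.sum_mul]
  rw [Finset.sum_comm]
  exact Finset.sum_congr rfl fun x _ => Finset.sum_congr rfl fun y _ => by ring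

private lemma key_real' {h r w : ℝ} (hh : 0 < h) (hr : 0 < r) (ha : 0 < 1 + -w * r)
    {δ : ℝ} (hδ : -w ≤ δ) :
    -Real.log (1 + max (-w) (1/h - 1/r) * r) + max (-w) (1/h - 1/r) * h ≤
    -Real.log (1 + δ * r) + δ * h := by
  set δs := max (-w) (1/h - 1/r) with hδs
  have hδs' : -w ≤ δs := le_max_left _ _
  have hA : 0 < 1 + δs * r := by nlinarith
  have hC : 0 < 1 + δ * r := by nlinarith
  have hlog : Real.log ((1 + δ * r)/(1 + δs * r)) ≤ (1 + δ * r)/(1 + δs * r) - 1 :=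
    Real.log_le_sub_one_of_pos (div_pos hC hA)
  rw [Real.log_div hC.ne' hA.ne'] at hlog
  have key : (δ - δs) * (h - r / (1 + δs * r)) ≥ 0 := by
    rcases le_total (1/h - 1/r) (-w) with hc | hc
    · have hmax : δs = -w := max_eq_left hc
      have h1 : 0 ≤ δ - δs := by rw [hmax]; linarith
      have h2 : 0 ≤ h - r / (1 + δs * r) := by
        rw [hmax, sub_nonneg, div_le_iff₀ (by linarith)]
        have : (1/h - 1/r) * (h * r) ≤ -w * (h * r) := by
          apply mul_le_mul_of_nonneg_right hc (by positivity)
        have hexp : (1/h - 1/r) * (h * r) = r - h := by field_simp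
        nlinarith
      exact mul_nonneg h1 h2
    · have hmax : δs = 1/h - 1/r := max_eq_right hc
      have : h - r / (1 + δs * r) = 0 := by
        rw [hmax]
        have : 1 + (1/h - 1/r) * r = r / h := by field_simp; ring
        rw [this]
        field_simp
        ring
      rw [this, mul_zero]
  have hfrac : (1 + δ * r)/(1 + δs * r) - 1 = (δ - δs) * r / (1 + δs * r) := by
    rw [div_sub_one hA.ne']; ring
  rw [hfrac] at hlog
  have hdiv : (δ - δs) * r / (1 + δs * r) ≤ (δ - δs) * h := by
    rw [mul_div_assoc]
    nlinarith [key]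
  linarith [hlog, hdiv]

theorem edge_weight_update {N : ℕ} (hN : 2 ≤ N)
    (S : Matrix (Fin N) (Fin N) ℝ) (hS : S.PosDef)
    (q : Fin N → ℝ) (qmin : ℝ) (hqmin : 0 < qmin) (hq : ∀ k, qmin ≤ q k)
    (L : Matrix (Fin N) (Fin N) ℝ) (hL : L.PosSemidef)
    (i j : Fin N) (hij : i ≠ j)
    (w : ℝ) (hw : 0 ≤ w)
    (hLw : (L - w • vecMulVec (Pi.single i 1 - Pi.single j 1)
        (Pi.single i 1 - Pi.single j 1)).PosSemidef) :
    let Q := Matrix.diagonal q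
    let b : Fin N → ℝ := Pi.single i 1 - Pi.single j 1
    let h := b ⬝ᵥ S *ᵥ b
    let r := b ⬝ᵥ (Q + L)⁻¹ *ᵥ b
    let δs := max (-w) (1 / h - 1 / r)
    ∀ δ : ℝ, -w ≤ δ →
      (Q + L + δ • vecMulVec b b).PosDef ∧
      -Real.log (Q + L + δs • vecMulVec b b).det + δs * h ≤
        -Real.log (Q + L + δ • vecMulVec b b).det + δ * h := by
  intro Q b h r δs δ hδ
  have hb : b ≠ 0 := by
    intro hbz
    have h1 : b i = 1 := by
      show ((Pi.single i 1 - Pi.single j 1 : Fin N → ℝ)) i = 1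
      simp only [Pi.sub_apply, Pi.single_eq_same, Pi.single_eq_of_ne hij, sub_zero]
    rw [hbz] at h1
    simp at h1
  have hQ : Q.PosDef :=
    posDef_diagonal_iff.mpr fun k => lt_of_lt_of_le hqmin (hq k)
  have hQL : (Q + L).PosDef := hQ.add_posSemidef hL
  have posDefAt : ∀ δ' : ℝ, -w ≤ δ' → (Q + L + δ' • vecMulVec b b).PosDef := by
    intro δ' hδ'
    have heq : Q + L + δ' • vecMulVec b b
        = Q + ((L - w • vecMulVec b b) + (δ' + w) • vecMulVec b b) := by
      rw [add_smul]; abel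
    rw [heq]
    exact hQ.add_posSemidef (hLw.add (psd_smul' (psd_vmv' b) (by linarith)))
  have detEq : ∀ δ' : ℝ,
      (Q + L + δ' • vecMulVec b b).det = (Q + L).det * (1 + δ' * r) := by
    intro δ'
    exact det_rank_one_update (Q + L) hQL b δ'
  have hdQL : 0 < (Q + L).det := hQL.det_pos
  have hr : 0 < r := by simpa using hQL.inv.dotProduct_mulVec_pos hb
  have hh : 0 < h := by simpa using hS.dotProduct_mulVec_pos hb
  have h1wr : 0 < 1 + -w * r := by
    have hp := (posDefAt (-w) le_rfl).det_pos
    rw [detEq] at hp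
    nlinarith [hp, hdQL]
  have hδs : -w ≤ δs := le_max_left _ _
  have hpos : ∀ δ' : ℝ, -w ≤ δ' → 0 < 1 + δ' * r := by
    intro δ' hδ'
    nlinarith
  refine ⟨posDefAt δ hδ, ?_⟩
  rw [detEq δs, detEq δ, Real.log_mul hdQL.ne' (hpos δs hδs).ne',
    Real.log_mul hdQL.ne' (hpos δ hδ).ne']
  have hδseq : δs = max (-w) (1/h - 1/r) := rfl
  have := key_real' hh hr h1wr hδ
  rw [← hδseq] at this
  linarith
end

section
/- Let N ≥ 2, q_min > 0, and let S be an N×N real symmetric positive definite matrix. Consider minimizing F(w, q) = −log det(Q(q) + L(w)) + trace((Q(q) + L(w))·S) over all symmetric nonnegative edge-weight functions w (w_{kl} = w_{lk} ≥ 0 for k ≠ l) and all q ∈ ℝᴺ with q_k ≥ q_min for all k, where L(w) is the combinatorial Laplacian with off-diagonal entries −w_{kl} and diagonal entries Σ_{l≠k} w_{kl}, and Q(q) = diag(q). If (w, q) is a global minimizer of F over this feasible set, and i ≠ j are indices with w_{ij} > 0, q_i > q_min and q_j > q_min, then S_{ij} ≠ 0 and w_{ij} ≤ (1/|S_{ij}|)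 · ρ_{ij}² / (1 − ρ_{ij}²), where ρ_{ij} = S_{ij} / √(S_{ii}·S_{jj}); equivalently w_{ij} ≤ |S_{ij}| / (S_{ii}·S_{jj} − S_{ij}²). -/
open Matrix

/-- The combinatorial graph Laplacian of an edge-weight function `w`. -/
def combLaplacian {N : ℕ} (w : Fin N → Fin N → ℝ) : Matrix (Fin N) (Fin N) ℝ :=
  Matrix.of fun k l =>
    if k = l then ∑ m ∈ Finset.univ.filter (fun m => m ≠ k), w k m else -(w k l)

/-- The graph-learning cost F(w, q) = −log det(Q(q) + L(w)) + trace((Q(q) + L(w))·S). -/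
noncomputable def glCost {N : ℕ} (S : Matrix (Fin N) (Fin N) ℝ)
    (w : Fin N → Fin N → ℝ) (q : Fin N → ℝ) : ℝ :=
  -Real.log (Matrix.diagonal q + combLaplacian w).det +
    ((Matrix.diagonal q + combLaplacian w) * S).trace

/-- Feasible set: symmetric nonnegative edge weights and vertex importances ≥ q_min. -/
def glFeasible {N : ℕ} (qmin : ℝ) (w : Fin N → Fin N → ℝ) (q : Fin N → ℝ) : Prop :=
  (∀ k l, k ≠ l → w k l = w l k) ∧ (∀ k l, k ≠ l → 0 ≤ w k l) ∧ (∀ k, qmin ≤ q k)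

namespace GLAux

variable {N : ℕ}

lemma lap_apply_ne (w : Fin N → Fin N → ℝ) {k l : Fin N} (h : k ≠ l) :
    combLaplacian w k l = -(w k l) := by
  simp [combLaplacian, h]

lemma lap_apply_diag (w : Fin N → Fin N → ℝ) (k : Fin N) :
    combLaplacian w k k = ∑ m ∈ Finset.univ.erase k, w k m := by
  simp [combLaplacian, Finset.filter_ne']

lemma lap_mulVec (w : Fin N → Fin N → ℝ) (x : Fin N → ℝ) (k : Fin N) :
    (combLaplacian w *ᵥ x) k = ∑ l ∈ Finset.univ.erase k, w k l * (x k - x l) := by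
  have h0 : (combLaplacian w *ᵥ x) k = ∑ l, combLaplacian w k l * x l := rfl
  rw [h0, ← Finset.add_sum_erase _ _ (Finset.mem_univ k), lap_apply_diag, Finset.sum_mul]
  rw [← Finset.sum_add_distrib]
  apply Finset.sum_congr rfl
  intro l hl
  have hkl : k ≠ l := fun h => (Finset.ne_of_mem_erase hl) h.symm
  rw [lap_apply_ne w hkl]
  ring

lemma lap_form (w : Fin N → Fin N → ℝ) (x : Fin N → ℝ) :
    x ⬝ᵥ (combLaplacian w *ᵥ x)
      = ∑ k, ∑ l ∈ Finset.univ.erase k, w k l * (x k * (x k - x l)) := by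
  rw [dotProduct]
  apply Finset.sum_congr rfl
  intro k _
  rw [lap_mulVec, Finset.mul_sum]
  apply Finset.sum_congr rfl
  intro l _
  ring

lemma sum_erase_swap (f : Fin N → Fin N → ℝ) :
    ∑ k, ∑ l ∈ Finset.univ.erase k, f k l = ∑ k, ∑ l ∈ Finset.univ.erase k, f l k := by
  have h : ∀ g : Fin N → Fin N → ℝ, ∀ k : Fin N,
      ∑ l ∈ Finset.univ.erase k, g k l = ∑ l, if l ≠ k then g k l else 0 := by
    intro g k
    rw [← Finset.filter_ne' Finset.univ k, Finset.sum_filter]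
  simp only [h]
  rw [Finset.sum_comm]
  apply Finset.sum_congr rfl
  intro k _
  rw [h (fun a b => f b a) k]
  apply Finset.sum_congr rfl
  intro l _
  simp only [ne_comm]

lemma two_mul_lap_form (w : Fin N → Fin N → ℝ)
    (hsym : ∀ k l, k ≠ l → w k l = w l k) (x : Fin N → ℝ) :
    2 * (x ⬝ᵥ (combLaplacian w *ᵥ x))
      = ∑ k, ∑ l ∈ Finset.univ.erase k, w k l * (x k - x l) ^ 2 := by
  rw [two_mul, lap_form]
  nth_rewrite 2 [sum_erase_swap]
  rw [← Finset.sum_add_distrib]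
  apply Finset.sum_congr rfl
  intro k _
  rw [← Finset.sum_add_distrib]
  apply Finset.sum_congr rfl
  intro l hl
  have hlk : l ≠ k := Finset.ne_of_mem_erase hl
  rw [hsym l k hlk]
  ring

lemma lap_form_nonneg (w : Fin N → Fin N → ℝ)
    (hsym : ∀ k l, k ≠ l → w k l = w l k) (hnn : ∀ k l, k ≠ l → 0 ≤ w k l)
    (x : Fin N → ℝ) : 0 ≤ x ⬝ᵥ (combLaplacian w *ᵥ x) := by
  have h := two_mul_lap_form w hsym x
  have h2 : 0 ≤ ∑ k, ∑ l ∈ Finset.univ.erase k, w k l * (x k - x l) ^ 2 := by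
    apply Finset.sum_nonneg
    intro k _
    apply Finset.sum_nonneg
    intro l hl
    have : k ≠ l := fun hh => (Finset.ne_of_mem_erase hl) hh.symm
    exact mul_nonneg (hnn k l this) (sq_nonneg _)
  linarith


lemma diag_form (q x : Fin N → ℝ) :
    x ⬝ᵥ (Matrix.diagonal q *ᵥ x) = ∑ k, q k * x k ^ 2 := by
  simp only [dotProduct, mulVec_diagonal]
  exact Finset.sum_congr rfl fun k _ => by ring

lemma K_sym (w : Fin N → Fin N → ℝ) (q : Fin N → ℝ)
    (hsym : ∀ k l, k ≠ l → w k l = w l k) :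
    (Matrix.diagonal q + combLaplacian w)ᵀ = Matrix.diagonal q + combLaplacian w := by
  ext a b
  rcases eq_or_ne a b with h | h
  · subst h; rfl
  · simp only [transpose_apply, Matrix.add_apply, diagonal_apply_ne _ h, diagonal_apply_ne' _ h,
      lap_apply_ne w h, lap_apply_ne w h.symm, hsym a b h]

lemma K_posDef (w : Fin N → Fin N → ℝ) (q : Fin N → ℝ)
    (hsym : ∀ k l, k ≠ l → w k l = w l k) (hnn : ∀ k l, k ≠ l → 0 ≤ w k l)
    (hq : ∀ k, 0 < q k) : (Matrix.diagonal q + combLaplacian w).PosDef := by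
  refine Matrix.PosDef.of_dotProduct_mulVec_pos ?_ ?_
  · rw [Matrix.IsHermitian, conjTranspose]
    rw [show star = (id : ℝ → ℝ) from rfl]
    rw [Matrix.map_id]
    exact K_sym w q hsym
  · intro x hx
    rw [star_trivial, add_mulVec, dotProduct_add, diag_form]
    have h1 : 0 ≤ x ⬝ᵥ (combLaplacian w *ᵥ x) := lap_form_nonneg w hsym hnn x
    have h2 : 0 < ∑ k, q k * x k ^ 2 := by
      obtain ⟨k, hk⟩ := Function.ne_iff.1 hx
      apply Finset.sum_pos' (fun l _ => mul_nonneg (hq l).le (sq_nonneg _))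
      exact ⟨k, Finset.mem_univ k, mul_pos (hq k) (pow_two_pos_of_ne_zero hk)⟩
    linarith

lemma form_abs_le (w : Fin N → Fin N → ℝ) (q : Fin N → ℝ)
    (hnn : ∀ k l, k ≠ l → 0 ≤ w k l) (x : Fin N → ℝ) :
    (fun k => |x k|) ⬝ᵥ ((Matrix.diagonal q + combLaplacian w) *ᵥ (fun k => |x k|))
      ≤ x ⬝ᵥ ((Matrix.diagonal q + combLaplacian w) *ᵥ x) := by
  simp only [add_mulVec, dotProduct_add, diag_form, lap_form]
  have hd : ∑ k, q k * |x k| ^ 2 = ∑ k, q k * x k ^ 2 := by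
    exact Finset.sum_congr rfl fun k _ => by rw [sq_abs]
  rw [hd]
  have hl : ∑ k, ∑ l ∈ Finset.univ.erase k, w k l * (|x k| * (|x k| - |x l|))
      ≤ ∑ k, ∑ l ∈ Finset.univ.erase k, w k l * (x k * (x k - x l)) := by
    apply Finset.sum_le_sum
    intro k _
    apply Finset.sum_le_sum
    intro l hl
    have hkl : k ≠ l := fun hh => (Finset.ne_of_mem_erase hl) hh.symm
    have h1 : |x k| * (|x k| - |x l|) ≤ x k * (x k - x l) := by
      have : x k * x l ≤ |x k| * |x l| := by
        rw [← abs_mul]; exact le_abs_self _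
      have h2 : |x k| * |x k| = x k * x k := by rw [← abs_mul, abs_mul_self]
      nlinarith
    exact mul_le_mul_of_nonneg_left h1 (hnn k l hkl)
  linarith

lemma mulVec_symm_dot (K : Matrix (Fin N) (Fin N) ℝ) (h : Kᵀ = K) (y z : Fin N → ℝ) :
    y ⬝ᵥ (K *ᵥ z) = (K *ᵥ y) ⬝ᵥ z := by
  rw [dotProduct_mulVec, ← h, vecMul_transpose, h]

/-- Variational nonnegativity: if `K *ᵥ y = b` and `b ⬝ᵥ |y| = b ⬝ᵥ y`,
then `y` is entrywise nonnegative. -/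
lemma sol_nonneg (w : Fin N → Fin N → ℝ) (q : Fin N → ℝ)
    (hsym : ∀ k l, k ≠ l → w k l = w l k) (hnn : ∀ k l, k ≠ l → 0 ≤ w k l)
    (hq : ∀ k, 0 < q k) (b y : Fin N → ℝ)
    (hy : (Matrix.diagonal q + combLaplacian w) *ᵥ y = b)
    (hb : b ⬝ᵥ (fun k => |y k|) = b ⬝ᵥ y) :
    ∀ k, 0 ≤ y k := by
  set K := Matrix.diagonal q + combLaplacian w with hKdef
  have hKpd := K_posDef w q hsym hnn hq
  have hKsym := K_sym w q hsym
  set z : Fin N → ℝ := fun k => |y k| with hz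
  have h1 : z ⬝ᵥ (K *ᵥ z) ≤ y ⬝ᵥ (K *ᵥ y) := form_abs_le w q hnn y
  have hyKz : y ⬝ᵥ (K *ᵥ z) = b ⬝ᵥ z := by
    rw [mulVec_symm_dot K hKsym, hy]
  have hzKy : z ⬝ᵥ (K *ᵥ y) = b ⬝ᵥ z := by
    rw [hy, dotProduct_comm]
  have hyKy : y ⬝ᵥ (K *ᵥ y) = b ⬝ᵥ y := by
    rw [hy, dotProduct_comm]
  have hexp : (z - y) ⬝ᵥ (K *ᵥ (z - y))
      = z ⬝ᵥ (K *ᵥ z) - y ⬝ᵥ (K *ᵥ y) := by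
    rw [mulVec_sub, dotProduct_sub, sub_dotProduct, sub_dotProduct]
    rw [hyKz, hzKy, hyKy, hb]
    ring
  have hle : (z - y) ⬝ᵥ (K *ᵥ (z - y)) ≤ 0 := by rw [hexp]; linarith
  have hzy : z - y = 0 := by
    by_contra hne
    have := hKpd.dotProduct_mulVec_pos (x := z - y) hne
    rw [star_trivial] at this
    linarith
  intro k
  have : z k = y k := by
    have := congrFun hzy k
    simpa [sub_eq_zero] using this
  rw [← this]
  exact abs_nonneg _


lemma smul_vecMulVec (t : ℝ) (u v : Fin N → ℝ) :
    t • vecMulVec u v = vecMulVec (t • u) v := by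
  ext a b
  simp [vecMulVec_apply]
  ring

lemma det_rank_one_update (K : Matrix (Fin N) (Fin N) ℝ) (hunit : IsUnit K.det)
    (u : Fin N → ℝ) (t : ℝ) :
    (K + t • vecMulVec u u).det = K.det * (1 + t * ((u ᵥ* K⁻¹) ⬝ᵥ u)) := by
  have hKK : K * K⁻¹ = 1 := Matrix.mul_nonsing_inv K hunit
  have key : K + t • vecMulVec u u
      = K * (1 + Matrix.replicateCol (Fin 1) (K⁻¹ *ᵥ (t • u)) * Matrix.replicateRow (Fin 1) u) := by
    rw [smul_vecMulVec, vecMulVec_eq (Fin 1), Matrix.mul_add, Matrix.mul_one,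
      Matrix.replicateCol_mulVec, ← Matrix.mul_assoc, ← Matrix.mul_assoc, hKK, Matrix.one_mul]
    rfl
  rw [key, det_mul]
  erw [det_one_add_replicateCol_mul_replicateRow]
  congr 1
  rw [mulVec_smul, dotProduct_smul, smul_eq_mul, dotProduct_mulVec]

lemma trace_vecMulVec_mul (A : Matrix (Fin N) (Fin N) ℝ) (u : Fin N → ℝ) :
    (vecMulVec u u * A).trace = (u ᵥ* A) ⬝ᵥ u := by
  simp only [Matrix.trace, Matrix.diag_apply, mul_apply, vecMulVec_apply, vecMul, dotProduct,
    Finset.sum_mul, Finset.mul_sum]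
  apply Finset.sum_congr rfl; intro k _
  apply Finset.sum_congr rfl; intro m _
  ring

lemma trace_rank_one_update (K A : Matrix (Fin N) (Fin N) ℝ) (u : Fin N → ℝ) (t : ℝ) :
    ((K + t • vecMulVec u u) * A).trace = (K * A).trace + t * ((u ᵥ* A) ⬝ᵥ u) := by
  rw [Matrix.add_mul, Matrix.trace_add, Matrix.smul_mul, Matrix.trace_smul,
    trace_vecMulVec_mul, smul_eq_mul]

lemma stationarity (S K : Matrix (Fin N) (Fin N) ℝ) (hdet : 0 < K.det)
    (u : Fin N → ℝ) (ε : ℝ) (hε : 0 < ε)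
    (hpt : ∀ t : ℝ, |t| < ε →
      -Real.log K.det + (K * S).trace ≤
      -Real.log (K + t • vecMulVec u u).det + ((K + t • vecMulVec u u) * S).trace) :
    (u ᵥ* K⁻¹) ⬝ᵥ u = (u ᵥ* S) ⬝ᵥ u := by
  set c : ℝ := (u ᵥ* K⁻¹) ⬝ᵥ u with hc
  set s : ℝ := (u ᵥ* S) ⬝ᵥ u with hs
  have hunit : IsUnit K.det := hdet.ne'.isUnit
  set h : ℝ → ℝ := fun t => t * s - Real.log (1 + t * c) with hh
  set ε' : ℝ := min ε (1 / (1 + |c|)) with hε'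
  have hε'pos : 0 < ε' := by
    apply lt_min hε
    positivity
  have hpos : ∀ t : ℝ, |t| < ε' → 0 < 1 + t * c := by
    intro t ht
    have h1 : |t * c| ≤ |t| * |c| := (abs_mul t c).le
    have h2 : |t| < 1 / (1 + |c|) := lt_of_lt_of_le ht (min_le_right _ _)
    have h3 : (0:ℝ) ≤ |c| := abs_nonneg c
    have h4 : |t| * |c| < 1 := by
      rcases eq_or_lt_of_le h3 with h5 | h5
      · rw [← h5]; simp
      · calc |t| * |c| < (1 / (1 + |c|)) * |c| := by
              apply mul_lt_mul_of_pos_right h2 h5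
          _ < 1 := by
              rw [div_mul_eq_mul_div, mul_comm]
              rw [div_lt_one (by positivity)]
              linarith
    have h6 : -(t * c) ≤ |t * c| := neg_le_abs _
    nlinarith
  have hnonneg : ∀ t : ℝ, |t| < ε' → 0 ≤ h t := by
    intro t ht
    have h1 := hpt t (lt_of_lt_of_le ht (min_le_left _ _))
    rw [det_rank_one_update K hunit u t, trace_rank_one_update K S u t] at h1
    rw [Real.log_mul hdet.ne' (hpos t ht).ne'] at h1
    simp only [hh]
    linarith
  have hmin : IsLocalMin h 0 := by
    have hball : ∀ᶠ t in nhds (0:ℝ), 0 ≤ h t := by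
      filter_upwards [Metric.ball_mem_nhds (0:ℝ) hε'pos] with t ht
      rw [Metric.mem_ball, Real.dist_eq, sub_zero] at ht
      exact hnonneg t ht
    have h0 : h 0 = 0 := by simp [hh]
    unfold IsLocalMin IsMinFilter
    rw [h0]
    exact hball
  have hD : HasDerivAt h (s - c) 0 := by
    have h1 : HasDerivAt (fun t : ℝ => t * s) s 0 := hasDerivAt_mul_const s
    have h2 : HasDerivAt (fun t : ℝ => 1 + t * c) c 0 := by
      simpa using (hasDerivAt_mul_const c).const_add 1
    have h3 : HasDerivAt (fun t : ℝ => Real.log (1 + t * c)) (c / (1 + 0 * c)) 0 :=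
      h2.log (by norm_num)
    simp only [zero_mul, add_zero, div_one] at h3
    exact h1.sub h3
  have := hmin.hasDerivAt_eq_zero hD
  linarith [this]


lemma single_vecMulVec (a : Fin N) :
    vecMulVec (Pi.single a 1 : Fin N → ℝ) (Pi.single a 1)
      = Matrix.diagonal (Pi.single a (1:ℝ)) := by
  ext k l
  simp only [vecMulVec_apply, Matrix.diagonal_apply, Pi.single_apply]
  by_cases hk : k = a <;> by_cases hl : l = a <;> by_cases hkl : k = l <;>
    simp_all

lemma q_perturb (qmin : ℝ) (w : Fin N → Fin N → ℝ) (q : Fin N → ℝ)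
    (hfeas : glFeasible qmin w q) (a : Fin N) (t : ℝ) (ht : |t| < q a - qmin) :
    glFeasible qmin w (q + t • (Pi.single a 1 : Fin N → ℝ)) ∧
    Matrix.diagonal (q + t • (Pi.single a 1 : Fin N → ℝ)) + combLaplacian w
      = (Matrix.diagonal q + combLaplacian w)
        + t • vecMulVec (Pi.single a 1 : Fin N → ℝ) (Pi.single a 1) := by
  obtain ⟨hsym, hnn, hq⟩ := hfeas
  constructor
  · refine ⟨hsym, hnn, fun k => ?_⟩
    by_cases hk : k = a
    · subst hk
      simp only [Pi.add_apply, Pi.smul_apply, Pi.single_eq_same, smul_eq_mul, mul_one]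
      have := neg_abs_le t
      linarith
    · simp [Pi.single_apply, hk, hq k]
  · have hdg : Matrix.diagonal (q + t • (Pi.single a 1 : Fin N → ℝ))
        = Matrix.diagonal q + t • Matrix.diagonal (Pi.single a 1 : Fin N → ℝ) := by
      ext k l
      by_cases h : k = l <;> simp [Matrix.diagonal_apply, h]
    rw [hdg, single_vecMulVec]
    abel

/-- The symmetric one-edge indicator. -/
def pertDelta (i j : Fin N) : Fin N → Fin N → ℝ :=
  fun k l => if (k = i ∧ l = j) ∨ (k = j ∧ l = i) then 1 else 0

lemma pertDelta_sum (i j : Fin N) (hij : i ≠ j) (k : Fin N) :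
    ∑ m ∈ Finset.univ.erase k, pertDelta i j k m
      = ((Pi.single i 1 - Pi.single j 1 : Fin N → ℝ) k) ^ 2 := by
  by_cases hk : k = i
  · subst hk
    have h1 : ∑ m ∈ Finset.univ.erase k, pertDelta k j k m
        = ∑ m ∈ Finset.univ.erase k, (if m = j then (1:ℝ) else 0) :=
      Finset.sum_congr rfl fun m _ => by simp [pertDelta, hij]
    rw [h1, Finset.sum_ite_eq' (Finset.univ.erase k) j (fun _ => (1:ℝ))]
    simp [Finset.mem_erase, hij.symm, Pi.single_apply, hij.symm]
  · by_cases hk2 : k = j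
    · subst hk2
      have h1 : ∑ m ∈ Finset.univ.erase k, pertDelta i k k m
          = ∑ m ∈ Finset.univ.erase k, (if m = i then (1:ℝ) else 0) :=
        Finset.sum_congr rfl fun m _ => by simp [pertDelta, hij.symm, and_comm]
      rw [h1, Finset.sum_ite_eq' (Finset.univ.erase k) i (fun _ => (1:ℝ))]
      simp [Finset.mem_erase, hij, Pi.single_apply, hij]
    · have h1 : ∑ m ∈ Finset.univ.erase k, pertDelta i j k m
          = ∑ m ∈ Finset.univ.erase k, (0:ℝ) :=
        Finset.sum_congr rfl fun m _ => by simp [pertDelta, hk, hk2]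
      rw [h1]
      simp [Pi.single_apply, hk, hk2]

lemma pertDelta_off (i j : Fin N) (hij : i ≠ j) {k l : Fin N} (hkl : k ≠ l) :
    ((Pi.single i 1 - Pi.single j 1 : Fin N → ℝ) k)
      * ((Pi.single i 1 - Pi.single j 1 : Fin N → ℝ) l) = -(pertDelta i j k l) := by
  simp only [Pi.sub_apply, Pi.single_apply, pertDelta]
  by_cases hk : k = i <;> by_cases hk2 : k = j <;> by_cases hl : l = i <;>
    by_cases hl2 : l = j <;> simp_all

lemma w_perturb (qmin : ℝ) (w : Fin N → Fin N → ℝ) (q : Fin N → ℝ)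
    (hfeas : glFeasible qmin w q) (i j : Fin N) (hij : i ≠ j) (t : ℝ) (ht : |t| < w i j) :
    glFeasible qmin (fun k l => w k l + t * pertDelta i j k l) q ∧
    Matrix.diagonal q + combLaplacian (fun k l => w k l + t * pertDelta i j k l)
      = (Matrix.diagonal q + combLaplacian w)
        + t • vecMulVec (Pi.single i 1 - Pi.single j 1 : Fin N → ℝ)
            (Pi.single i 1 - Pi.single j 1) := by
  obtain ⟨hsym, hnn, hq⟩ := hfeas
  have hδsym : ∀ k l, pertDelta i j k l = pertDelta i j l k := by
    intro k l
    have hiff : (k = i ∧ l = j ∨ k = j ∧ l = i) ↔ (l = i ∧ k = j ∨ l = j ∧ k = i) := by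
      tauto
    simp only [pertDelta]
    rw [if_congr hiff rfl rfl]
  have habs := neg_abs_le t
  constructor
  · refine ⟨fun k l hkl => ?_, fun k l hkl => ?_, hq⟩
    · show w k l + t * pertDelta i j k l = w l k + t * pertDelta i j l k
      rw [hδsym k l, hsym k l hkl]
    by_cases hc : (k = i ∧ l = j) ∨ (k = j ∧ l = i)
    · have hw : w k l = w i j := by
        rcases hc with ⟨hk, hl⟩ | ⟨hk, hl⟩
        · rw [hk, hl]
        · rw [hk, hl, hsym j i hij.symm]
      show 0 ≤ w k l + t * pertDelta i j k l
      simp only [pertDelta, if_pos hc, mul_one]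
      linarith
    · show 0 ≤ w k l + t * pertDelta i j k l
      simp only [pertDelta, if_neg hc, mul_zero, add_zero]
      exact hnn k l hkl
  · ext k l
    rcases eq_or_ne k l with hkl | hkl
    · subst hkl
      simp only [Matrix.add_apply, Matrix.smul_apply, lap_apply_diag, smul_eq_mul,
        vecMulVec_apply]
      rw [Finset.sum_add_distrib, ← Finset.mul_sum, pertDelta_sum i j hij k]
      ring
    · simp only [Matrix.add_apply, Matrix.smul_apply, lap_apply_ne _ hkl, smul_eq_mul,
        vecMulVec_apply]
      rw [pertDelta_off i j hij hkl]
      ring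

lemma single_qf (A : Matrix (Fin N) (Fin N) ℝ) (a b : Fin N) :
    ((Pi.single a 1 : Fin N → ℝ) ᵥ* A) ⬝ᵥ (Pi.single b 1 : Fin N → ℝ) = A a b := by
  simp [vecMul, dotProduct, Pi.single_apply, Finset.sum_ite_eq]

lemma diff_qf (A : Matrix (Fin N) (Fin N) ℝ) (i j : Fin N) :
    (((Pi.single i 1 - Pi.single j 1) : Fin N → ℝ) ᵥ* A)
        ⬝ᵥ ((Pi.single i 1 - Pi.single j 1) : Fin N → ℝ)
      = A i i - A i j - A j i + A j j := by
  rw [Matrix.sub_vecMul, sub_dotProduct, dotProduct_sub, dotProduct_sub]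
  rw [single_qf, single_qf, single_qf, single_qf]
  ring

lemma qf_single' (A : Matrix (Fin N) (Fin N) ℝ) (a b : Fin N) :
    (Pi.single a 1 : Fin N → ℝ) ⬝ᵥ (A *ᵥ (Pi.single b 1 : Fin N → ℝ)) = A a b := by
  rw [dotProduct_mulVec, single_qf]

lemma pair_dot (α β : ℝ) (i j : Fin N) (hij : i ≠ j) (v : Fin N → ℝ) :
    (fun a => α * (Pi.single i 1 : Fin N → ℝ) a + β * (Pi.single j 1 : Fin N → ℝ) a : Fin N → ℝ) ⬝ᵥ v
      = α * v i + β * v j := by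
  simp only [dotProduct, add_mul, Finset.sum_add_distrib]
  congr 1
  · have hterm : ∀ a : Fin N, α * (Pi.single i 1 : Fin N → ℝ) a * v a
        = if a = i then α * v a else 0 :=
      fun a => by by_cases h : a = i <;> simp [Pi.single_apply, h]
    rw [Finset.sum_congr rfl (fun a _ => hterm a),
      Finset.sum_ite_eq' Finset.univ i (fun a => α * v a)]
    simp
  · have hterm : ∀ a : Fin N, β * (Pi.single j 1 : Fin N → ℝ) a * v a
        = if a = j then β * v a else 0 :=
      fun a => by by_cases h : a = j <;> simp [Pi.single_apply, h]
    rw [Finset.sum_congr rfl (fun a _ => hterm a),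
      Finset.sum_ite_eq' Finset.univ j (fun a => β * v a)]
    simp

lemma pair_qf (A : Matrix (Fin N) (Fin N) ℝ) (α β : ℝ) (i j : Fin N) (hij : i ≠ j) :
    (fun a => α * (Pi.single i 1 : Fin N → ℝ) a + β * (Pi.single j 1 : Fin N → ℝ) a : Fin N → ℝ) ⬝ᵥ
        (A *ᵥ (fun a => α * (Pi.single i 1 : Fin N → ℝ) a + β * (Pi.single j 1 : Fin N → ℝ) a : Fin N → ℝ))
      = α^2 * A i i + α*β*A i j + α*β*A j i + β^2*A j j := by
  have hv : (fun a => α * (Pi.single i 1 : Fin N → ℝ) a + β * (Pi.single j 1 : Fin N → ℝ) a : Fin N → ℝ)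
      = α • (Pi.single i 1 : Fin N → ℝ) + β • (Pi.single j 1 : Fin N → ℝ) := by
    funext a; simp [Pi.smul_apply]
  rw [dotProduct_mulVec, hv, Matrix.add_vecMul, Matrix.smul_vecMul, Matrix.smul_vecMul,
    add_dotProduct, smul_dotProduct, smul_dotProduct, dotProduct_add, dotProduct_add,
    dotProduct_smul, dotProduct_smul, dotProduct_smul, dotProduct_smul,
    single_qf, single_qf, single_qf, single_qf]
  simp only [smul_eq_mul]
  ring

lemma inv_col_mulVec (K : Matrix (Fin N) (Fin N) ℝ) (hunit : IsUnit K.det) (b : Fin N) :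
    K *ᵥ (fun a => K⁻¹ a b) = (Pi.single b 1 : Fin N → ℝ) := by
  have h := Matrix.mul_nonsing_inv K hunit
  funext a
  have h2 := congrFun (congrFun h a) b
  rw [Matrix.mul_apply] at h2
  show ∑ c, K a c * K⁻¹ c b = _
  rw [h2, Matrix.one_apply, Pi.single_apply]

lemma row_eq (w : Fin N → Fin N → ℝ) (q : Fin N → ℝ) (x : Fin N → ℝ) (k : Fin N) :
    ((Matrix.diagonal q + combLaplacian w) *ᵥ x) k
      = q k * x k + ∑ l ∈ Finset.univ.erase k, w k l * (x k - x l) := by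
  rw [add_mulVec, Pi.add_apply, lap_mulVec]
  congr 1
  rw [mulVec_diagonal]

lemma single_dot (a : Fin N) (v : Fin N → ℝ) :
    (Pi.single a 1 : Fin N → ℝ) ⬝ᵥ v = v a := by
  simp [dotProduct, Pi.single_apply, Finset.sum_ite_eq]

end GLAux

theorem edge_weight_upper_bound' {N : ℕ} (hN : 2 ≤ N) (qmin : ℝ) (hqmin : 0 < qmin)
    (S : Matrix (Fin N) (Fin N) ℝ) (hS : S.PosDef)
    (w : Fin N → Fin N → ℝ) (q : Fin N → ℝ)
    (hfeas : glFeasible qmin w q)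
    (hopt : ∀ w' q', glFeasible qmin w' q' → glCost S w q ≤ glCost S w' q')
    (i j : Fin N) (hij : i ≠ j) (hwij : 0 < w i j)
    (hqi : qmin < q i) (hqj : qmin < q j) :
    S i j ≠ 0 ∧
    w i j ≤ (1 / |S i j|) *
      ((S i j / Real.sqrt (S i i * S j j)) ^ 2 /
        (1 - (S i j / Real.sqrt (S i i * S j j)) ^ 2)) ∧
    w i j ≤ |S i j| / (S i i * S j j - (S i j) ^ 2) := by
  obtain ⟨hsym, hnn, hqf⟩ := hfeas
  have hfeas' : glFeasible qmin w q := ⟨hsym, hnn, hqf⟩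
  have hqpos : ∀ k, 0 < q k := fun k => lt_of_lt_of_le hqmin (hqf k)
  have hKpd := GLAux.K_posDef w q hsym hnn hqpos
  set K := Matrix.diagonal q + combLaplacian w with hK
  set d0 := S i i * S j j - S i j ^ 2 with hd0
  have hdet : 0 < K.det := hKpd.det_pos
  have hunit : IsUnit K.det := hdet.ne'.isUnit
  have hglq : glCost S w q = -Real.log K.det + (K * S).trace := rfl
  -- first-order conditions in the q-directions
  have stat_q : ∀ a : Fin N, qmin < q a →
      ((Pi.single a 1 : Fin N → ℝ) ᵥ* K⁻¹) ⬝ᵥ (Pi.single a 1 : Fin N → ℝ)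
        = ((Pi.single a 1 : Fin N → ℝ) ᵥ* S) ⬝ᵥ (Pi.single a 1 : Fin N → ℝ) := by
    intro a ha
    apply GLAux.stationarity S K hdet _ (q a - qmin) (by linarith)
    intro t ht
    obtain ⟨hf2, heq⟩ := GLAux.q_perturb qmin w q hfeas' a t ht
    have h1 := hopt w (q + t • (Pi.single a 1 : Fin N → ℝ)) hf2
    rw [hglq] at h1
    unfold glCost at h1
    rw [heq, ← hK] at h1
    exact h1
  -- first-order condition in the w-direction
  have stat_w :
      (((Pi.single i 1 - Pi.single j 1) : Fin N → ℝ) ᵥ* K⁻¹)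
          ⬝ᵥ ((Pi.single i 1 - Pi.single j 1) : Fin N → ℝ)
        = (((Pi.single i 1 - Pi.single j 1) : Fin N → ℝ) ᵥ* S)
          ⬝ᵥ ((Pi.single i 1 - Pi.single j 1) : Fin N → ℝ) := by
    apply GLAux.stationarity S K hdet _ (w i j) hwij
    intro t ht
    obtain ⟨hf2, heq⟩ := GLAux.w_perturb qmin w q hfeas' i j hij t ht
    have h1 := hopt (fun k l => w k l + t * GLAux.pertDelta i j k l) q hf2
    rw [hglq] at h1
    unfold glCost at h1
    rw [heq, ← hK] at h1
    exact h1
  -- symmetry facts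
  have hKs : Kᵀ = K := by rw [hK]; exact GLAux.K_sym w q hsym
  have hAsym : ∀ a b, K⁻¹ a b = K⁻¹ b a := by
    intro a b
    have h1 : (K⁻¹)ᵀ = K⁻¹ := by rw [Matrix.transpose_nonsing_inv, hKs]
    have := congrFun (congrFun h1 b) a
    simpa using this
  have hSsym : ∀ a b, S a b = S b a := by
    intro a b
    have := congrFun (congrFun hS.1 b) a
    simpa [Matrix.conjTranspose_apply] using this
  -- the three entry identities
  have hii : K⁻¹ i i = S i i := by
    have := stat_q i hqi
    rwa [GLAux.single_qf, GLAux.single_qf] at this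
  have hjj : K⁻¹ j j = S j j := by
    have := stat_q j hqj
    rwa [GLAux.single_qf, GLAux.single_qf] at this
  have hsum4 : K⁻¹ i i - K⁻¹ i j - K⁻¹ j i + K⁻¹ j j
      = S i i - S i j - S j i + S j j := by
    have := stat_w
    rwa [GLAux.diff_qf, GLAux.diff_qf] at this
  have hKij : K⁻¹ i j = S i j := by
    have h1 := hAsym i j
    have h2 := hSsym i j
    linarith
  -- positivity of diagonal entries and the 2×2 minor of S
  have hsne : ∀ a : Fin N, (Pi.single a 1 : Fin N → ℝ) ≠ 0 := by
    intro a h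
    have := congrFun h a
    simp at this
  have hSiipos : 0 < S i i := by
    have h := hS.dotProduct_mulVec_pos (x := Pi.single i 1) (hsne i)
    rwa [star_trivial, GLAux.qf_single'] at h
  have hSjjpos : 0 < S j j := by
    have h := hS.dotProduct_mulVec_pos (x := Pi.single j 1) (hsne j)
    rwa [star_trivial, GLAux.qf_single'] at h
  have hdpos : 0 < d0 := by
    have hyne : (fun a => S j j * (Pi.single i 1 : Fin N → ℝ) a
        + (-(S i j)) * (Pi.single j 1 : Fin N → ℝ) a) ≠ 0 := by
      intro hzero
      have h0 := congrFun hzero i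
      simp [Pi.single_apply, hij, hij.symm] at h0
      exact hSjjpos.ne' h0
    have hy := hS.dotProduct_mulVec_pos hyne
    rw [star_trivial, GLAux.pair_qf S (S j j) (-(S i j)) i j hij] at hy
    have hSji := hSsym i j
    rw [← hSji] at hy
    rw [hd0]
    by_contra hcon
    push_neg at hcon
    nlinarith [hy, mul_nonneg hSjjpos.le (by linarith : (0:ℝ) ≤ S i j ^ 2 - S i i * S j j)]
  -- the column x = K⁻¹ eⱼ is nonnegative and its i-entry is positive
  have hxKv : K *ᵥ (fun a => K⁻¹ a j) = (Pi.single j 1 : Fin N → ℝ) :=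
    GLAux.inv_col_mulVec K hunit j
  have hxnn : ∀ k, 0 ≤ K⁻¹ k j := by
    apply GLAux.sol_nonneg w q hsym hnn hqpos (Pi.single j 1) _ (by rw [← hK]; exact hxKv)
    rw [GLAux.single_dot, GLAux.single_dot]
    show |K⁻¹ j j| = K⁻¹ j j
    rw [hjj]
    exact abs_of_pos hSjjpos
  have hxipos : 0 < K⁻¹ i j := by
    have hre := GLAux.row_eq w q (fun a => K⁻¹ a j) i
    rw [← hK] at hre
    have heq0 : q i * K⁻¹ i j
        + ∑ l ∈ Finset.univ.erase i, w i l * (K⁻¹ i j - K⁻¹ l j) = 0 := by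
      rw [← hre, congrFun hxKv i, Pi.single_eq_of_ne hij]
    have hsplit : ∑ l ∈ Finset.univ.erase i, w i l * (K⁻¹ i j - K⁻¹ l j)
        = (∑ l ∈ Finset.univ.erase i, w i l) * K⁻¹ i j
          - ∑ l ∈ Finset.univ.erase i, w i l * K⁻¹ l j := by
      rw [Finset.sum_mul, ← Finset.sum_sub_distrib]
      exact Finset.sum_congr rfl fun l _ => by ring
    have hterm : w i j * K⁻¹ j j ≤ ∑ l ∈ Finset.univ.erase i, w i l * K⁻¹ l j := by
      apply Finset.single_le_sum (f := fun l => w i l * K⁻¹ l j)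
      · intro l hl
        exact mul_nonneg (hnn i l (Finset.mem_erase.1 hl).1.symm) (hxnn l)
      · exact Finset.mem_erase.2 ⟨hij.symm, Finset.mem_univ j⟩
    have hcnn : 0 ≤ ∑ l ∈ Finset.univ.erase i, w i l :=
      Finset.sum_nonneg fun l hl => hnn i l (Finset.mem_erase.1 hl).1.symm
    rw [hjj] at hterm
    rw [hsplit] at heq0
    by_contra hcon
    push_neg at hcon
    nlinarith [hqpos i, mul_pos hwij hSjjpos,
      mul_nonpos_of_nonneg_of_nonpos hcnn hcon,
      mul_nonpos_of_nonneg_of_nonpos (hqpos i).le hcon]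
  have hSijpos : 0 < S i j := hKij ▸ hxipos
  -- the auxiliary vector uu
  set uu : Fin N → ℝ :=
    fun a => (S j j / d0) * K⁻¹ a i + (-(S i j) / d0) * K⁻¹ a j with huu
  set b2 : Fin N → ℝ :=
    fun a => (S j j / d0) * (Pi.single i 1 : Fin N → ℝ) a
      + (-(S i j) / d0) * (Pi.single j 1 : Fin N → ℝ) a with hb2
  have hb2v : K *ᵥ uu = b2 := by
    have huusum : uu = (S j j / d0) • (fun a => K⁻¹ a i)
        + (-(S i j) / d0) • (fun a => K⁻¹ a j) := by
      funext a
      simp [huu, Pi.smul_apply, smul_eq_mul]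
    rw [huusum, mulVec_add, mulVec_smul, mulVec_smul,
      GLAux.inv_col_mulVec K hunit i, GLAux.inv_col_mulVec K hunit j]
    funext a
    simp [hb2, Pi.smul_apply, smul_eq_mul]
  have huui : uu i = 1 := by
    show (S j j / d0) * K⁻¹ i i + (-(S i j) / d0) * K⁻¹ i j = 1
    rw [hii, hKij]
    field_simp
    rw [hd0]
    ring
  have huuj : uu j = 0 := by
    show (S j j / d0) * K⁻¹ j i + (-(S i j) / d0) * K⁻¹ j j = 0
    rw [hAsym j i, hKij, hjj]
    ring
  have huunn : ∀ k, 0 ≤ uu k := by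
    apply GLAux.sol_nonneg w q hsym hnn hqpos b2 uu (by rw [← hK]; exact hb2v)
    rw [hb2, GLAux.pair_dot _ _ _ _ hij, GLAux.pair_dot _ _ _ _ hij]
    simp only [huui, huuj]
    norm_num
  -- row j applied to uu
  have hkey : ∑ l ∈ Finset.univ.erase j, w j l * uu l = S i j / d0 := by
    have hre := GLAux.row_eq w q uu j
    rw [← hK] at hre
    have hbj : b2 j = -(S i j) / d0 := by
      simp [hb2, Pi.single_apply, hij, hij.symm]
    have heq0 : q j * uu j + ∑ l ∈ Finset.univ.erase j, w j l * (uu j - uu l)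
        = -(S i j) / d0 := by
      rw [← hre, congrFun hb2v j, hbj]
    rw [huuj] at heq0
    have hneg : ∑ l ∈ Finset.univ.erase j, w j l * ((0:ℝ) - uu l)
        = -∑ l ∈ Finset.univ.erase j, w j l * uu l := by
      rw [← Finset.sum_neg_distrib]
      exact Finset.sum_congr rfl fun l _ => by ring
    rw [hneg] at heq0
    have : -(S i j) / d0 = -(S i j / d0) := by ring
    rw [this] at heq0
    linarith
  have hterm2 : w j i * uu i ≤ ∑ l ∈ Finset.univ.erase j, w j l * uu l := by
    apply Finset.single_le_sum (f := fun l => w j l * uu l)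
    · intro l hl
      exact mul_nonneg (hnn j l (Finset.mem_erase.1 hl).1.symm) (huunn l)
    · exact Finset.mem_erase.2 ⟨hij, Finset.mem_univ i⟩
  have hfin : w i j ≤ S i j / d0 := by
    rw [huui, mul_one, hsym j i hij.symm, hkey] at hterm2
    exact hterm2
  -- conclusion
  have habs : |S i j| = S i j := abs_of_pos hSijpos
  refine ⟨hSijpos.ne', ?_, ?_⟩
  · have hP : 0 < S i i * S j j := mul_pos hSiipos hSjjpos
    have hsq : Real.sqrt (S i i * S j j) ^ 2 = S i i * S j j := Real.sq_sqrt hP.le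
    have h1 : (S i j / Real.sqrt (S i i * S j j)) ^ 2 = S i j ^ 2 / (S i i * S j j) := by
      rw [div_pow, hsq]
    have h2 : 1 - S i j ^ 2 / (S i i * S j j) = d0 / (S i i * S j j) := by
      rw [hd0]
      field_simp
    have key : (1 / |S i j|) *
        ((S i j / Real.sqrt (S i i * S j j)) ^ 2 /
          (1 - (S i j / Real.sqrt (S i i * S j j)) ^ 2)) = S i j / d0 := by
      rw [habs, h1, h2]
      rw [div_div_div_cancel_right₀]
      · field_simp
      · exact hP.ne'
    rw [key]
    exact hfin
  · rw [habs]
    show w i j ≤ S i j / d0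
    exact hfin


theorem edge_weight_upper_bound {N : ℕ} (hN : 2 ≤ N) (qmin : ℝ) (hqmin : 0 < qmin)
    (S : Matrix (Fin N) (Fin N) ℝ) (hS : S.PosDef)
    (w : Fin N → Fin N → ℝ) (q : Fin N → ℝ)
    (hfeas : glFeasible qmin w q)
    (hopt : ∀ w' q', glFeasible qmin w' q' → glCost S w q ≤ glCost S w' q')
    (i j : Fin N) (hij : i ≠ j) (hwij : 0 < w i j)
    (hqi : qmin < q i) (hqj : qmin < q j) :
    S i j ≠ 0 ∧
    w i j ≤ (1 / |S i j|) *
      ((S i j / Real.sqrt (S i i * S j j)) ^ 2 /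
        (1 - (S i j / Real.sqrt (S i i * S j j)) ^ 2)) ∧
    w i j ≤ |S i j| / (S i i * S j j - (S i j) ^ 2) :=
  edge_weight_upper_bound' hN qmin hqmin S hS w q hfeas hopt i j hij hwij hqi hqj
end

section
/- Let N ≥ 2, q_min > 0, and let S be an N×N real symmetric positive definite matrix. Consider minimizing F(w, q) = −log det(Q(q) + L(w)) + trace((Q(q) + L(w))·S) over all symmetric nonnegative edge-weight functions w (w_{kl} = w_{lk} ≥ 0 for k ≠ l) and all q ∈ ℝᴺ with q_k ≥ q_min for all k, where L(w) is the combinatorial Laplacian with off-diagonal entries −w_{kl} and diagonal entries Σ_{l≠k} w_{kl}, and Q(q) = diag(q). If (w, q) is a global minimizer of F over this feasible set and i ≠ j are indices with w_{ij} > 0, then S_{ij} > 0. -/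
open Matrix

namespace GLaux

variable {N : ℕ}
lemma combLaplacian_mulVec (w : Fin N → Fin N → ℝ) (x : Fin N → ℝ) (k : Fin N) :
    (combLaplacian w *ᵥ x) k = ∑ l, w k l * (x k - x l) := by
  simp only [mulVec, dotProduct, combLaplacian, Matrix.of_apply]
  rw [Finset.filter_ne']
  rw [← Finset.add_sum_erase _ _ (Finset.mem_univ k),
      ← Finset.add_sum_erase _ (fun l => w k l * (x k - x l)) (Finset.mem_univ k)]
  simp only [if_pos rfl, if_true, eq_self_iff_true, sub_self, mul_zero, zero_add]
  rw [Finset.sum_mul, ← Finset.sum_add_distrib]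
  refine Finset.sum_congr rfl fun l hl => ?_
  rw [if_neg (Finset.ne_of_mem_erase hl).symm]
  ring
lemma quadform_eq (w : Fin N → Fin N → ℝ) (x : Fin N → ℝ) :
    x ⬝ᵥ (combLaplacian w *ᵥ x) = ∑ k, ∑ l, w k l * (x k * (x k - x l)) := by
  simp only [dotProduct, combLaplacian_mulVec, Finset.mul_sum]
  exact Finset.sum_congr rfl fun k _ => Finset.sum_congr rfl fun l _ => by ring
lemma quadform_nonneg (w : Fin N → Fin N → ℝ)
    (hsymm : ∀ k l, k ≠ l → w k l = w l k) (hpos : ∀ k l, k ≠ l → 0 ≤ w k l)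
    (x : Fin N → ℝ) : 0 ≤ x ⬝ᵥ (combLaplacian w *ᵥ x) := by
  have e2 : x ⬝ᵥ (combLaplacian w *ᵥ x) = ∑ k, ∑ l, w k l * (x l * (x l - x k)) := by
    rw [quadform_eq, Finset.sum_comm]
    refine Finset.sum_congr rfl fun k _ => Finset.sum_congr rfl fun l _ => ?_
    rcases eq_or_ne k l with rfl | h
    · rfl
    · rw [hsymm l k h.symm]
  have h2 : 2 * (x ⬝ᵥ (combLaplacian w *ᵥ x)) = ∑ k, ∑ l, w k l * (x k - x l)^2 := by
    nth_rewrite 1 [two_mul]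
    nth_rewrite 1 [quadform_eq]
    nth_rewrite 1 [e2]
    rw [← Finset.sum_add_distrib]
    refine Finset.sum_congr rfl fun k _ => ?_
    rw [← Finset.sum_add_distrib]
    exact Finset.sum_congr rfl fun l _ => by ring
  have hs : 0 ≤ ∑ k, ∑ l, w k l * (x k - x l)^2 := by
    refine Finset.sum_nonneg fun k _ => Finset.sum_nonneg fun l _ => ?_
    rcases eq_or_ne k l with rfl | h
    · have : (x k - x k)^2 = 0 := by ring
      rw [this, mul_zero]
    · exact mul_nonneg (hpos k l h) (sq_nonneg _)
  linarith

variable {N : ℕ}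
lemma combLaplacian_isHermitian (w : Fin N → Fin N → ℝ)
    (hsymm : ∀ k l, k ≠ l → w k l = w l k) : (combLaplacian w).IsHermitian := by
  ext k l
  simp only [conjTranspose_apply, combLaplacian, Matrix.of_apply, star_trivial]
  rcases eq_or_ne k l with rfl | h
  · rfl
  · rw [if_neg h.symm, if_neg h, hsymm l k h.symm]
lemma det_add_vecMulVec (A : Matrix (Fin N) (Fin N) ℝ) (hA : IsUnit A.det)
    (u v : Fin N → ℝ) :
    (A + vecMulVec u v).det = A.det * (1 + v ⬝ᵥ (A⁻¹ *ᵥ u)) := by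
  rw [vecMulVec_eq Unit, det_add_replicateCol_mul_replicateRow (ι := Unit) hA, det_unique (n := Unit), Matrix.mul_assoc]
  congr 1
lemma trace_vecMulVec_mul (u v : Fin N → ℝ) (S : Matrix (Fin N) (Fin N) ℝ) :
    (vecMulVec u v * S).trace = v ⬝ᵥ (S *ᵥ u) := by
  simp only [trace, Matrix.diag_apply, Matrix.mul_apply, vecMulVec_apply, dotProduct, mulVec,
    Finset.mul_sum]
  rw [Finset.sum_comm]
  exact Finset.sum_congr rfl fun b _ => Finset.sum_congr rfl fun a _ => by ring
lemma dot_single_sub (A : Matrix (Fin N) (Fin N) ℝ) (i j : Fin N) :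
    (Pi.single i (1:ℝ) - Pi.single j 1) ⬝ᵥ (A *ᵥ (Pi.single i 1 - Pi.single j 1)) =
      A i i + A j j - A i j - A j i := by
  simp [mulVec_sub, dotProduct_sub, sub_dotProduct, mulVec_single, single_dotProduct]
  ring
lemma combLaplacian_perturb (w : Fin N → Fin N → ℝ) (u : Fin N → ℝ)
    (hu : ∑ m, u m = 0) (c : ℝ) :
    combLaplacian (fun a b => w a b + c * (u a * u b)) =
      combLaplacian w + vecMulVec u ((-c) • u) := by
  ext a b
  simp only [combLaplacian, Matrix.of_apply, Matrix.add_apply, vecMulVec_apply,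
    Pi.smul_apply, smul_eq_mul]
  rcases eq_or_ne a b with rfl | h
  · rw [if_pos rfl, if_pos rfl]
    simp only [Finset.filter_ne']
    rw [Finset.sum_add_distrib, ← Finset.mul_sum, ← Finset.mul_sum,
      Finset.sum_erase_eq_sub (Finset.mem_univ a),
      Finset.sum_erase_eq_sub (Finset.mem_univ a), hu]
    ring
  · rw [if_neg h, if_neg h]
    ring

variable {N : ℕ}
lemma dot_expand (A : Matrix (Fin N) (Fin N) ℝ) (x y : Fin N → ℝ) :
    x ⬝ᵥ (A *ᵥ y) = ∑ k, ∑ l, A k l * (x k * y l) := by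
  simp only [dotProduct, mulVec, Finset.mul_sum]
  exact Finset.sum_congr rfl fun k _ => Finset.sum_congr rfl fun l _ => by ring
lemma dot_swap (A : Matrix (Fin N) (Fin N) ℝ) (hA : ∀ a b, A a b = A b a)
    (x y : Fin N → ℝ) : x ⬝ᵥ (A *ᵥ y) = y ⬝ᵥ (A *ᵥ x) := by
  rw [dot_expand, dot_expand, Finset.sum_comm]
  exact Finset.sum_congr rfl fun k _ => Finset.sum_congr rfl fun l _ => by rw [hA l k]; ring
lemma quad_single (A : Matrix (Fin N) (Fin N) ℝ) (k : Fin N) :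
    Pi.single k (1:ℝ) ⬝ᵥ (A *ᵥ Pi.single k 1) = A k k := by
  simp [mulVec_single, single_dotProduct]
lemma single_ne_zero' (k : Fin N) : Pi.single k (1:ℝ) ≠ (0 : Fin N → ℝ) := by
  intro h
  have := congrFun h k
  simp at this
lemma laplacian_posDef (w : Fin N → Fin N → ℝ) (q : Fin N → ℝ)
    (hsymm : ∀ k l, k ≠ l → w k l = w l k) (hpos : ∀ k l, k ≠ l → 0 ≤ w k l)
    (hq : ∀ k, 0 < q k) : (Matrix.diagonal q + combLaplacian w).PosDef :=
  (Matrix.PosDef.diagonal hq).add_posSemidef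
    (.of_dotProduct_mulVec_nonneg (combLaplacian_isHermitian w hsymm) fun x => by
      simpa using quadform_nonneg w hsymm hpos x)
lemma posDef_diag_pos {A : Matrix (Fin N) (Fin N) ℝ} (hA : A.PosDef) (k : Fin N) :
    0 < A k k := by
  have := hA.dotProduct_mulVec_pos (single_ne_zero' k)
  simpa [quad_single] using this
lemma inv_entry_pos (w : Fin N → Fin N → ℝ) (q : Fin N → ℝ)
    (hsymm : ∀ k l, k ≠ l → w k l = w l k) (hpos : ∀ k l, k ≠ l → 0 ≤ w k l)
    (hq : ∀ k, 0 < q k) (i j : Fin N) (hij : i ≠ j) (hwij : 0 < w i j) :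
    0 < (Matrix.diagonal q + combLaplacian w)⁻¹ i j := by
  set M := Matrix.diagonal q + combLaplacian w with hMdef
  have hM : M.PosDef := laplacian_posDef w q hsymm hpos hq
  have hMinv : M⁻¹.PosDef := hM.inv
  have hdetU : IsUnit M.det := hM.det_pos.ne'.isUnit
  -- entrywise symmetry of M
  have hMsym : ∀ a b, M a b = M b a := by
    intro a b
    have := congrFun (congrFun hM.1 a) b
    simpa [conjTranspose_apply] using this.symm
  have hMoff : ∀ a b, a ≠ b → M a b = -(w a b) := by
    intro a b hab
    simp [hMdef, Matrix.add_apply, Matrix.diagonal_apply_ne _ hab, combLaplacian, if_neg hab]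
  set x : Fin N → ℝ := M⁻¹ *ᵥ Pi.single j 1 with hxdef
  have hMx : M *ᵥ x = Pi.single j 1 := by
    rw [hxdef, mulVec_mulVec, Matrix.mul_nonsing_inv _ hdetU, one_mulVec]
  have hxj : x j = M⁻¹ j j := by simp [hxdef, mulVec_single]
  have hxi : x i = M⁻¹ i j := by simp [hxdef, mulVec_single]
  -- nonnegativity of x
  set p : Fin N → ℝ := fun a => |x a| with hpdef
  have hpMp : p ⬝ᵥ (M *ᵥ p) ≤ x ⬝ᵥ (M *ᵥ x) := by
    rw [dot_expand, dot_expand]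
    refine Finset.sum_le_sum fun k _ => Finset.sum_le_sum fun l _ => ?_
    rcases eq_or_ne k l with rfl | h
    · simp only [hpdef]
      rw [abs_mul_abs_self]
    · rw [hMoff k l h]
      have h1 : x k * x l ≤ |x k| * |x l| := by
        calc x k * x l ≤ |x k * x l| := le_abs_self _
        _ = |x k| * |x l| := abs_mul _ _
      have h2 : 0 ≤ w k l := hpos k l h
      simp only [hpdef]
      nlinarith
  have hxMx : x ⬝ᵥ (M *ᵥ x) = x j := by rw [hMx, dotProduct_single, mul_one]
  have hz : (p - x) ⬝ᵥ (M *ᵥ (p - x)) ≤ 0 := by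
    have hswap : x ⬝ᵥ (M *ᵥ p) = p ⬝ᵥ (M *ᵥ x) := dot_swap M hMsym x p
    have hpMx : p ⬝ᵥ (M *ᵥ x) = p j := by rw [hMx, dotProduct_single, mul_one]
    have hpj : x j ≤ p j := le_abs_self _
    rw [sub_dotProduct, mulVec_sub, dotProduct_sub, dotProduct_sub, hswap, hpMx, hxMx]
    linarith
  have hzero : p - x = 0 := by
    by_contra hne
    have := hM.dotProduct_mulVec_pos hne
    simp only [star_trivial] at this
    linarith
  have hxnn : ∀ a, 0 ≤ x a := by
    intro a
    have := congrFun hzero a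
    simp only [Pi.sub_apply, Pi.zero_apply, sub_eq_zero, hpdef] at this
    rw [← this]
    exact abs_nonneg _
  -- x j > 0
  have hxjpos : 0 < x j := by
    rw [hxj]
    exact posDef_diag_pos hMinv j
  -- row i of M x = e_j
  have hrow : (M *ᵥ x) i = 0 := by
    rw [hMx]
    simp [Pi.single_apply, hij.symm]
  have hexp : M i i * x i = ∑ l ∈ Finset.univ.erase i, w i l * x l := by
    have : (M *ᵥ x) i = ∑ l, M i l * x l := rfl
    rw [this, ← Finset.add_sum_erase _ (fun l => M i l * x l) (Finset.mem_univ i)] at hrow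
    have hrest : ∑ l ∈ Finset.univ.erase i, M i l * x l
        = -∑ l ∈ Finset.univ.erase i, w i l * x l := by
      rw [← Finset.sum_neg_distrib]
      exact Finset.sum_congr rfl fun l hl => by
        rw [hMoff i l (Finset.ne_of_mem_erase hl).symm]; ring
    rw [hrest] at hrow
    linarith
  have hsum_ge : w i j * x j ≤ ∑ l ∈ Finset.univ.erase i, w i l * x l := by
    refine Finset.single_le_sum (f := fun l => w i l * x l) (fun l hl => ?_) ?_
    · exact mul_nonneg (hpos i l (Finset.ne_of_mem_erase hl).symm) (hxnn l)
    · exact Finset.mem_erase.mpr ⟨hij.symm, Finset.mem_univ j⟩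
  have hMii : 0 < M i i := posDef_diag_pos hM i
  have hprod : 0 < M i i * x i := by
    rw [hexp]
    exact lt_of_lt_of_le (mul_pos hwij hxjpos) hsum_ge
  rw [← hxi]
  nlinarith [hxnn i]

variable {N : ℕ}
lemma arith1 {s m t : ℝ} (h1 : 0 < 1 + m*t) (hkey : s*(1+t*m) < m) (ht : 0 < t) :
    s*t < 1 - 1/(1+m*t) := by
  have e : 1 - 1/(1+m*t) = m*t/(1+m*t) := by field_simp; ring
  rw [e, lt_div_iff₀ h1]
  nlinarith [mul_lt_mul_of_pos_right hkey ht]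
lemma arith2 {b c : ℝ} (hb : 0 < 1 - b) (h : b < c * (1 - b)) : -c < 1 - 1/(1-b) := by
  have e : 1 - 1/(1-b) = -b/(1-b) := by field_simp; ring
  rw [e, lt_div_iff₀ hb]
  nlinarith
lemma arith3 {x b c : ℝ} (hb : b ≠ 0) (hc : c ≠ 0) : x/(2*b*c)*(b*c) = x/2 := by
  field_simp
lemma arith4 {s m : ℝ} (hs : 0 < s) (hm : 0 < m) :
    s * (1 + (m - s)/(2*s*m)*m) = s + (m-s)/2 := by
  field_simp
lemma arith5 {e b c : ℝ} (he : 0 < e) (hb : 0 < b) (hc : 0 < c) (hbc : b < c)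
    (hkey : e * (b * c) ≤ (c - b)/2) : e * b < e * c * (1 - e * b) := by
  nlinarith [mul_le_mul_of_nonneg_left hkey he.le, mul_pos he (sub_pos.mpr hbc)]
lemma log_lb {y : ℝ} (hy : 0 < y) : 1 - 1/y ≤ Real.log y := by
  have h := Real.log_le_sub_one_of_pos (show (0:ℝ) < 1/y by positivity)
  rw [one_div, Real.log_inv] at h
  have h2 : (y:ℝ)⁻¹ = 1/y := (one_div y).symm
  linarith [h2 ▸ h]
end GLaux

open GLaux

theorem optimal_edges_positive_covariance {N : ℕ} (hN : 2 ≤ N)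
    (qmin : ℝ) (hqmin : 0 < qmin)
    (S : Matrix (Fin N) (Fin N) ℝ) (hS : S.PosDef)
    (w : Fin N → Fin N → ℝ) (q : Fin N → ℝ)
    (hfeas : glFeasible qmin w q)
    (hopt : ∀ w' q', glFeasible qmin w' q' → glCost S w q ≤ glCost S w' q')
    (i j : Fin N) (hij : i ≠ j) (hwij : 0 < w i j) :
    0 < S i j := by
  obtain ⟨hsymm, hpos, hqge⟩ := hfeas
  have hq : ∀ k, 0 < q k := fun k => lt_of_lt_of_le hqmin (hqge k)
  set M := Matrix.diagonal q + combLaplacian w with hMdef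
  clear_value M
  have hM : M.PosDef := by
    rw [hMdef]; exact laplacian_posDef w q hsymm hpos hq
  have hMinv : M⁻¹.PosDef := hM.inv
  have hdet : 0 < M.det := hM.det_pos
  have hdetU : IsUnit M.det := hdet.ne'.isUnit
  have hcost1 : glCost S w q = -Real.log M.det + (M * S).trace := by
    rw [hMdef, glCost]
  -- Step 1: KKT for q: M⁻¹ k k ≤ S k k
  have hKKTq : ∀ k, M⁻¹ k k ≤ S k k := by
    intro k
    by_contra hlt
    push_neg at hlt
    set μ := M⁻¹ k k with hμdef
    have hμ : 0 < μ := posDef_diag_pos hMinv k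
    have key : ∀ t : ℝ, 0 < t → Real.log (1 + μ * t) ≤ S k k * t := by
      intro t ht
      have hfeas' : glFeasible qmin w (Function.update q k (q k + t)) := by
        refine ⟨hsymm, hpos, fun l => ?_⟩
        rcases eq_or_ne l k with rfl | h
        · rw [Function.update_self]
          linarith [hqge l]
        · rw [Function.update_of_ne h]
          exact hqge l
      have hdiagup : Matrix.diagonal (Function.update q k (q k + t)) + combLaplacian w
          = M + vecMulVec (Pi.single k t) (Pi.single k 1) := by
        rw [hMdef, add_assoc, add_comm (combLaplacian w), ← add_assoc]
        congr 1
        ext a b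
        simp only [Matrix.diagonal_apply, Matrix.add_apply, vecMulVec_apply, Pi.single_apply,
          Function.update_apply]
        by_cases h1 : a = b <;> by_cases h2 : a = k <;> by_cases h3 : b = k <;>
          simp_all <;> ring
      have hv1 : Pi.single k (1:ℝ) ⬝ᵥ (M⁻¹ *ᵥ Pi.single k t) = μ * t := by
        simp [mulVec_single, single_dotProduct, hμdef]; ring
      have hv2 : Pi.single k (1:ℝ) ⬝ᵥ (S *ᵥ Pi.single k t) = S k k * t := by
        simp [mulVec_single, single_dotProduct]; ring
      have hcost2 : glCost S w (Function.update q k (q k + t))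
          = -Real.log (M.det * (1 + μ * t)) + ((M * S).trace + S k k * t) := by
        rw [glCost, hdiagup, det_add_vecMulVec M hdetU, Matrix.add_mul, Matrix.trace_add,
          trace_vecMulVec_mul, hv1, hv2]
      have hineq := hopt w (Function.update q k (q k + t)) hfeas'
      rw [hcost1, hcost2] at hineq
      have hpos1 : 0 < 1 + μ * t := by nlinarith
      rw [Real.log_mul hdet.ne' hpos1.ne'] at hineq
      linarith
    -- choose t
    obtain ⟨t, ht, hkey⟩ : ∃ t : ℝ, 0 < t ∧ S k k * (1 + t * μ) < μ := by
      rcases le_or_gt (S k k) 0 with h | h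
      · exact ⟨1, one_pos, by nlinarith⟩
      · refine ⟨(μ - S k k) / (2 * S k k * μ),
          div_pos (by linarith) (mul_pos (mul_pos two_pos h) hμ), ?_⟩
        rw [arith4 h hμ]
        linarith
    have hpos1 : 0 < 1 + μ * t := by nlinarith
    have hlb := log_lb hpos1
    have hub := key t ht
    have h2 := arith1 hpos1 hkey ht
    linarith
  -- Step 2: edge perturbation
  by_contra hcon
  push_neg at hcon
  set u : Fin N → ℝ := Pi.single i 1 - Pi.single j 1 with hudef
  clear_value u
  have hu0 : u ≠ 0 := by
    intro h
    have := congrFun h i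
    simp [hudef, Pi.single_apply, hij, hij.symm] at this
  have husum : ∑ m, u m = 0 := by
    simp [hudef, Finset.sum_sub_distrib]
  set β := u ⬝ᵥ (M⁻¹ *ᵥ u) with hβdef
  set γ := u ⬝ᵥ (S *ᵥ u) with hγdef
  clear_value β γ
  have hβpos : 0 < β := by rw [hβdef]; simpa using hMinv.dotProduct_mulVec_pos hu0
  have hγpos : 0 < γ := by rw [hγdef]; simpa using hS.dotProduct_mulVec_pos hu0
  have hSji : S j i = S i j := by
    have := congrFun (congrFun hS.1 i) j
    simpa [conjTranspose_apply] using this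
  have hMji : M⁻¹ j i = M⁻¹ i j := by
    have := congrFun (congrFun hMinv.1 i) j
    simpa [conjTranspose_apply] using this
  have hγval : γ = S i i + S j j - 2 * S i j := by
    rw [hγdef, hudef, dot_single_sub, hSji]; ring
  have hβval : β = M⁻¹ i i + M⁻¹ j j - 2 * M⁻¹ i j := by
    rw [hβdef, hudef, dot_single_sub, hMji]; ring
  have hν : 0 < M⁻¹ i j := by
    rw [hMdef]; exact inv_entry_pos w q hsymm hpos hq i j hij hwij
  have hγβ : β < γ := by
    have h1 := hKKTq i
    have h2 := hKKTq j
    rw [hγval, hβval]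
    linarith
  -- choose ε
  set ε := min (w i j) ((γ - β) / (2 * β * γ)) with hεdef
  clear_value ε
  have hε0 : 0 < ε := by
    rw [hεdef]
    exact lt_min hwij (div_pos (sub_pos.mpr hγβ) (by nlinarith [mul_pos hβpos hγpos]))
  have hεw : ε ≤ w i j := by
    rw [hεdef]; exact min_le_left _ _
  have hεkey : ε * (β * γ) ≤ (γ - β) / 2 := by
    have h : ε ≤ (γ - β) / (2 * β * γ) := by
      rw [hεdef]; exact min_le_right _ _
    calc ε * (β * γ) ≤ ((γ - β) / (2 * β * γ)) * (β * γ) :=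
          mul_le_mul_of_nonneg_right h (mul_pos hβpos hγpos).le
      _ = (γ - β) / 2 := arith3 hβpos.ne' hγpos.ne'
  have hεβ : ε * β < 1 := by nlinarith [mul_pos hε0 hβpos]
  have h1εβ : 0 < 1 - ε * β := by linarith
  -- perturbed weights
  set w' : Fin N → Fin N → ℝ := fun a b => w a b + ε * (u a * u b) with hw'def
  clear_value w'
  have huval : ∀ c, u c = (if c = i then (1:ℝ) else 0) - (if c = j then 1 else 0) := by
    intro c
    simp [hudef, Pi.single_apply]
  have hui : u i = 1 := by rw [huval]; simp [hij]
  have huj : u j = -1 := by rw [huval]; simp [hij.symm]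
  have hfeas' : glFeasible qmin w' q := by
    refine ⟨fun a b hab => ?_, fun a b hab => ?_, hqge⟩
    · simp only [hw'def]
      rw [hsymm a b hab]
      ring
    · simp only [hw'def]
      rcases eq_or_ne a i with rfl | hai
      · rcases eq_or_ne b j with rfl | hbj
        · rw [hui, huj]
          linarith
        · have hb0 : u b = 0 := by rw [huval, if_neg (Ne.symm hab), if_neg hbj]; ring
          rw [hb0, mul_zero, mul_zero, add_zero]
          exact hpos _ _ hab
      · rcases eq_or_ne a j with rfl | haj
        · rcases eq_or_ne b i with rfl | hbi
          · rw [hui, huj, hsymm _ _ hab]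
            linarith
          · have hb0 : u b = 0 := by rw [huval, if_neg hbi, if_neg (Ne.symm hab)]; ring
            rw [hb0, mul_zero, mul_zero, add_zero]
            exact hpos _ _ hab
        · have ha0 : u a = 0 := by rw [huval, if_neg hai, if_neg haj]; ring
          rw [ha0, zero_mul, mul_zero, add_zero]
          exact hpos _ _ hab
  have hL' : Matrix.diagonal q + combLaplacian w' = M + vecMulVec u ((-ε) • u) := by
    rw [hw'def, combLaplacian_perturb w u husum ε, hMdef, add_assoc]
  have hv1 : ((-ε) • u) ⬝ᵥ (M⁻¹ *ᵥ u) = -(ε * β) := by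
    rw [smul_dotProduct, smul_eq_mul, ← hβdef]; ring
  have hv2 : ((-ε) • u) ⬝ᵥ (S *ᵥ u) = -(ε * γ) := by
    rw [smul_dotProduct, smul_eq_mul, ← hγdef]; ring
  have h1' : (1 : ℝ) + -(ε * β) = 1 - ε * β := by ring
  have hcost2 : glCost S w' q
      = -Real.log (M.det * (1 - ε * β)) + ((M * S).trace + -(ε * γ)) := by
    rw [glCost, hL', det_add_vecMulVec M hdetU, Matrix.add_mul, Matrix.trace_add,
      trace_vecMulVec_mul, hv1, hv2, h1']
  have hineq := hopt w' q hfeas'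
  rw [hcost1, hcost2, Real.log_mul hdet.ne' h1εβ.ne'] at hineq
  -- contradiction via log lower bound
  have hlb := log_lb h1εβ
  have hstrict : ε * β < ε * γ * (1 - ε * β) := arith5 hε0 hβpos hγpos hγβ hεkey
  have h2 : -(ε * γ) < 1 - 1/(1 - ε * β) := arith2 h1εβ hstrict
  linarith
end
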